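/- The mass flow is additive under composition: for isotopies {h_t}, {k_t} in Homeo(M, μ) of a compact metric space with invariant probability measure μ, both starting at the identity, and for any continuous f : M → ℝ/ℤ, one has θ̃({h_t·k_t concatenation/composition})(f) = θ̃({h_t})(f) + θ̃({k_t})(f), where the composed isotopy is t ↦ h_t ∘ k_t. Equivalently, ∫_M (f∘(h₁∘k₁) − f)‾ dμ = ∫_M (f∘h₁ − f)‾ dμ + ∫_M (f∘k₁ − f)‾ dμ. -/

import Mathlib

/-!
The lifts of `t ↦ f (h t (k t x)) - f x` and of `t ↦ (f (h t (k t x)) - f (k t x)) + (f (k t x) - f x)`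
both vanish at `t = 0`, so by uniqueness of lifts through the covering `ℝ → ℝ/ℤ` they agree:
`Lhk t x = Lh t (k t x) + Lk t x`. Integrating at `t = 1` and using that `k 1` preserves `μ`
gives the additivity.
-/

open MeasureTheory

theorem AddCircle.eq_add_of_coe_eq_add {X : Type*} [TopologicalSpace X] [PreconnectedSpace X]
    {p : ℝ} {φ ψ χ : X → ℝ} (hφ : Continuous φ) (hψ : Continuous ψ) (hχ : Continuous χ)
    (hlift : ∀ x, (χ x : AddCircle p) = φ x + ψ x) {x₀ : X} (hx₀ : χ x₀ = φ x₀ + ψ x₀) :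
    χ = φ + ψ := by
  refine (AddCircle.isCoveringMap_coe p).eq_of_comp_eq hχ (hφ.add hψ) ?_ x₀ hx₀
  funext x
  simp [hlift x]

theorem MeasureTheory.MeasurePreserving.integral_comp_of_aestronglyMeasurable
    {α β G : Type*} [MeasurableSpace α] [MeasurableSpace β] [NormedAddCommGroup G]
    [NormedSpace ℝ G] {μ : Measure α} {ν : Measure β} {f : α → β}
    (hf : MeasurePreserving f μ ν) {g : β → G} (hg : AEStronglyMeasurable g ν) :
    ∫ x, g (f x) ∂μ = ∫ y, g y ∂ν := by
  rw [← hf.map_eq] at hg ⊢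
  exact (integral_map hf.measurable.aemeasurable hg).symm

theorem Continuous.integrable_of_compactSpace {X : Type*} [TopologicalSpace X] [CompactSpace X]
    [MeasurableSpace X] [OpensMeasurableSpace X] {μ : Measure X} [IsFiniteMeasure μ]
    {g : X → ℝ} (hg : Continuous g) : Integrable g μ :=
  hg.integrable_of_hasCompactSupport (HasCompactSupport.of_compactSpace g)

theorem mass_flow_additive_general {M : Type*} [MetricSpace M] [CompactSpace M]
    [MeasurableSpace M] [BorelSpace M]
    (μ : Measure M) [IsProbabilityMeasure μ]
    (h k : ℝ → M → M)
    (hkcont : Continuous fun p : ℝ × M => k p.1 p.2)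
    (hkmp : ∀ t, MeasurePreserving (k t) μ μ)
    (f : M → AddCircle (1:ℝ))
    (Lh Lk Lhk : ℝ → M → ℝ)
    (hLhc : Continuous fun p : ℝ × M => Lh p.1 p.2)
    (hLkc : Continuous fun p : ℝ × M => Lk p.1 p.2)
    (hLhkc : Continuous fun p : ℝ × M => Lhk p.1 p.2)
    (hLh : ∀ t x, ((Lh t x : ℝ) : AddCircle (1:ℝ)) = f (h t x) - f x)
    (hLk : ∀ t x, ((Lk t x : ℝ) : AddCircle (1:ℝ)) = f (k t x) - f x)
    (hLhk : ∀ t x, ((Lhk t x : ℝ) : AddCircle (1:ℝ)) = f (h t (k t x)) - f x)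
    (hLh0 : ∀ x, Lh 0 x = 0) (hLk0 : ∀ x, Lk 0 x = 0) (hLhk0 : ∀ x, Lhk 0 x = 0) :
    ∫ x, Lhk 1 x ∂μ = (∫ x, Lh 1 x ∂μ) + ∫ x, Lk 1 x ∂μ := by
  have hcocycle : ∀ x, Lhk 1 x = Lh 1 (k 1 x) + Lk 1 x := fun x => by
    have hsum := AddCircle.eq_add_of_coe_eq_add (x₀ := 0)
      (φ := fun t => Lh t (k t x)) (ψ := fun t => Lk t x) (χ := fun t => Lhk t x)
      (hLhc.comp (by fun_prop : Continuous fun t => (t, k t x)))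
      (hLkc.comp (by fun_prop : Continuous fun t : ℝ => (t, x)))
      (hLhkc.comp (by fun_prop : Continuous fun t : ℝ => (t, x)))
      (fun t => by rw [hLhk, hLh, hLk]; abel) (by simp [hLhk0, hLh0, hLk0])
    exact congrFun hsum 1
  have hLh1 : Continuous (Lh 1) := hLhc.comp (Continuous.prodMk_right 1)
  have hk1 : Continuous (k 1) := hkcont.comp (Continuous.prodMk_right 1)
  calc ∫ x, Lhk 1 x ∂μ = ∫ x, (Lh 1 (k 1 x) + Lk 1 x) ∂μ := by simp_rw [hcocycle]
    _ = (∫ x, Lh 1 (k 1 x) ∂μ) + ∫ x, Lk 1 x ∂μ :=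
      integral_add (hLh1.comp hk1).integrable_of_compactSpace
        (hLkc.comp (Continuous.prodMk_right 1)).integrable_of_compactSpace
    _ = (∫ x, Lh 1 x ∂μ) + ∫ x, Lk 1 x ∂μ := by
      rw [(hkmp 1).integral_comp_of_aestronglyMeasurable hLh1.aestronglyMeasurable]

/-- Additivity of the mass flow under composition of isotopies:
`θ̃({h_t ∘ k_t})(f) = θ̃({h_t})(f) + θ̃({k_t})(f)`, i.e.
`∫ (f∘(h₁∘k₁) − f)‾ dμ = ∫ (f∘h₁ − f)‾ dμ + ∫ (f∘k₁ − f)‾ dμ`,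
where overlines denote the continuous lifts vanishing at `t = 0`. -/
theorem mass_flow_additive {M : Type*} [MetricSpace M] [CompactSpace M]
    [ConnectedSpace M] [MeasurableSpace M] [BorelSpace M]
    (μ : Measure M) [IsProbabilityMeasure μ]
    (h k : ℝ → M → M)
    (hhcont : Continuous fun p : ℝ × M => h p.1 p.2)
    (hkcont : Continuous fun p : ℝ × M => k p.1 p.2)
    (hh : ∀ t, MeasurePreserving (h t) μ μ) (hkmp : ∀ t, MeasurePreserving (k t) μ μ)
    (h0 : h 0 = id) (k0 : k 0 = id)
    (f : M → AddCircle (1:ℝ)) (hf : Continuous f)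
    (Lh Lk Lhk : ℝ → M → ℝ)
    (hLhc : Continuous fun p : ℝ × M => Lh p.1 p.2)
    (hLkc : Continuous fun p : ℝ × M => Lk p.1 p.2)
    (hLhkc : Continuous fun p : ℝ × M => Lhk p.1 p.2)
    (hLh : ∀ t x, ((Lh t x : ℝ) : AddCircle (1:ℝ)) = f (h t x) - f x)
    (hLk : ∀ t x, ((Lk t x : ℝ) : AddCircle (1:ℝ)) = f (k t x) - f x)
    (hLhk : ∀ t x, ((Lhk t x : ℝ) : AddCircle (1:ℝ)) = f (h t (k t x)) - f x)
    (hLh0 : ∀ x, Lh 0 x = 0) (hLk0 : ∀ x, Lk 0 x = 0) (hLhk0 : ∀ x, Lhk 0 x = 0) :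
    ∫ x, Lhk 1 x ∂μ = (∫ x, Lh 1 x ∂μ) + ∫ x, Lk 1 x ∂μ :=
  mass_flow_additive_general μ h k hkcont hkmp f Lh Lk Lhk hLhc hLkc hLhkc hLh hLk hLhk hLh0 hLk0
    hLhk0
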